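/- arXiv:0904.1312 — 2 statements merged into one kernel-verified Lean document; each statement's English description precedes it below -/
import Mathlib

section
/- Bias of empirical means: under the positive Ricci curvature assumption with constant κ ∈ (0,1], for every Lipschitz function f : 𝒳 → ℝ, every starting point x ∈ 𝒳 and all integers T₀ ≥ 0, T ≥ 1, the bias of the empirical mean satisfies |E_x π̂(f) − π(f)| ≤ ((1−κ)^{T₀+1} / (κ T)) · E(x) · ‖f‖_Lip. -/
open MeasureTheory ENNReal
open scoped NNReal

noncomputable section

variable {X : Type*} [MetricSpace X] [MeasurableSpace X]

/-- The L¹ Wasserstein distance between two measures on a metric space,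
defined as the infimum of the transport cost over all couplings. -/
def W1 (μ ν : Measure X) : ℝ≥0∞ :=
  ⨅ (ξ : Measure (X × X)) (_ : ξ.map Prod.fst = μ) (_ : ξ.map Prod.snd = ν),
    ∫⁻ p, edist p.1 p.2 ∂ξ

/-- The Markov kernel `P` has (coarse) Ricci curvature at least `κ`:
`W₁(P_x, P_y) ≤ (1-κ) d(x,y)` for all `x, y`. -/
def PosCurvature (P : X → Measure X) (κ : ℝ) : Prop :=
  ∀ x y : X, W1 (P x) (P y) ≤ ENNReal.ofReal ((1 - κ) * dist x y)

/-- `N`-step transition kernel: `stepN P 0 x = δ_x` and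
`stepN P (N+1) x = ∫ P_z(dy) (stepN P N x)(dz)`. -/
def stepN (P : X → Measure X) : ℕ → X → Measure X
  | 0 => fun x => Measure.dirac x
  | n + 1 => fun x => (stepN P n x).bind P

/-- Iterated averaging operator `P^N f (x) = ∫ f d(P_x^N)`. -/
def avgN (P : X → Measure X) (n : ℕ) (f : X → ℝ) (x : X) : ℝ :=
  ∫ y, f y ∂(stepN P n x)

/-- Law of the trajectory `(X_1, …, X_n)` of the Markov chain started at `x`. -/
def pathLaw (P : X → Measure X) : (n : ℕ) → X → Measure (Fin n → X)
  | 0 => fun _ => Measure.dirac (fun i : Fin 0 => i.elim0)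
  | n + 1 => fun x => (P x).bind fun y => (pathLaw P n y).map (fun p => Fin.cons y p)

/-- Empirical mean `π̂(f) = (1/T) ∑_{k=T₀+1}^{T₀+T} f(X_k)`, as a function of the
trajectory `(X_1, …, X_{T₀+T})`. -/
def empMean (f : X → ℝ) (T₀ T : ℕ) (p : Fin (T₀ + T) → X) : ℝ :=
  (1 / (T : ℝ)) * ∑ i : Fin (T₀ + T), if T₀ ≤ (i : ℕ) then f (p i) else 0

/-- Expectation `E_x π̂(f)` of the empirical mean for the chain started at `x`. -/
def empExp (P : X → Measure X) (f : X → ℝ) (T₀ T : ℕ) (x : X) : ℝ :=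
  ∫ p, empMean f T₀ T p ∂(pathLaw P (T₀ + T) x)

/-- Variance `Var_x π̂(f)` of the empirical mean for the chain started at `x`. -/
def empVar (P : X → Measure X) (f : X → ℝ) (T₀ T : ℕ) (x : X) : ℝ :=
  ∫ p, (empMean f T₀ T p - empExp P f T₀ T x) ^ 2 ∂(pathLaw P (T₀ + T) x)

/-- Lipschitz seminorm `‖f‖_Lip = sup_{x ≠ y} |f(x) - f(y)|/d(x,y)`, as the least
Lipschitz constant of `f`. -/
def lipNorm (f : X → ℝ) : ℝ :=
  sInf {K : ℝ | ∀ x y : X, |f x - f y| ≤ K * dist x y}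

/-- Coarse diffusion constant `σ(x)² = ½ ∬ d(y,z)² P_x(dy) P_x(dz)`. -/
def diffSq (P : X → Measure X) (x : X) : ℝ :=
  (1 / 2) * ∫ y, ∫ z, dist y z ^ 2 ∂(P x) ∂(P x)

/-- Local dimension `n_x`. -/
def localDim (P : X → Measure X) (x : X) : ℝ :=
  sInf {r : ℝ | ∃ f : X → ℝ, (∃ K : ℝ≥0, LipschitzWith K f) ∧
    (∫ y, ∫ z, |f y - f z| ^ 2 ∂(P x) ∂(P x)) ≠ 0 ∧
    r = (∫ y, ∫ z, dist y z ^ 2 ∂(P x) ∂(P x)) /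
        (∫ y, ∫ z, |f y - f z| ^ 2 ∂(P x) ∂(P x))}

/-- Support of a measure: the set of points all of whose open neighborhoods have
positive measure. -/
def msupp (μ : Measure X) : Set X :=
  {x : X | ∀ U : Set X, IsOpen U → x ∈ U → μ U ≠ 0}

/-- Granularity `σ_∞ = ½ sup_x diam (supp P_x)`, valued in `ℝ≥0∞`. -/
def granularity (P : X → Measure X) : ℝ≥0∞ :=
  (1 / 2) * ⨆ x : X, EMetric.diam (msupp (P x))

/-- Eccentricity `E(x) = ∫ d(x,y) π(dy)`. -/
def ecc (π : Measure X) (x : X) : ℝ := ∫ y, dist x y ∂π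

/-!
Curvature says that `P` is a `(1 - κ)`-contraction for `W₁`. By the easy direction of
Kantorovich–Rubinstein duality, `x ↦ ∫ g ∂P x` is then `(1 - κ) K`-Lipschitz whenever `g` is
`K`-Lipschitz, so `P^n f` is `(1 - κ)^n ‖f‖_Lip`-Lipschitz. Invariance gives
`π(P^n f) = π(f)`, hence `|P^n f(x) - π(f)| = |∫ (P^n f(x) - P^n f(y)) π(dy)|
≤ (1 - κ)^n ‖f‖_Lip E(x)`. The marginal of `X_k` is `P_x^k`, so `E_x π̂(f)` is the average of
`P^k f(x)` over `T₀ < k ≤ T₀ + T`, and summing the geometric series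
`∑_{k > T₀} (1 - κ)^k ≤ (1 - κ)^(T₀+1) / κ` gives the bound.
-/

namespace MeasureTheory.Measure

variable {α β γ : Type*} [MeasurableSpace α] [MeasurableSpace β] [MeasurableSpace γ]
  {μ : Measure α} {κ : α → Measure β}

theorem integral_bind {E : Type*} [NormedAddCommGroup E] [NormedSpace ℝ E]
    (hκ : Measurable κ) {f : β → E} (hf : Integrable f (μ.bind κ)) :
    ∫ y, f y ∂μ.bind κ = ∫ x, ∫ y, f y ∂κ x ∂μ := by
  let K : ProbabilityTheory.Kernel α β := ⟨κ, hκ⟩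
  change Integrable f (μ.bind K) at hf
  change ∫ y, f y ∂μ.bind K = _
  rw [comp_eq_comp_const_apply] at hf ⊢
  exact ProbabilityTheory.Kernel.integral_comp hf

theorem map_bind (hκ : Measurable κ) {g : β → γ} (hg : Measurable g) :
    (μ.bind κ).map g = μ.bind fun a => (κ a).map g := by
  ext s hs
  have hκg : Measurable fun a => (κ a).map g := (measurable_map g hg).comp hκ
  rw [map_apply hg hs, bind_apply (hg hs) hκ.aemeasurable, bind_apply hs hκg.aemeasurable]
  exact lintegral_congr fun a => (map_apply hg hs).symm

theorem isProbabilityMeasure_bind [IsProbabilityMeasure μ] (hκ : Measurable κ)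
    (hκ₁ : ∀ a, IsProbabilityMeasure (κ a)) : IsProbabilityMeasure (μ.bind κ) :=
  ⟨by simp [bind_apply MeasurableSet.univ hκ.aemeasurable]⟩

theorem measurable_map_of_measurable_prod (hκ : Measurable κ)
    (hκ₁ : ∀ a, IsProbabilityMeasure (κ a)) {g : α → β → γ}
    (hg : Measurable fun q : α × β => g q.1 q.2) :
    Measurable fun a => (κ a).map (g a) := by
  let K : ProbabilityTheory.Kernel α β := ⟨κ, hκ⟩
  have : ProbabilityTheory.IsMarkovKernel K := ⟨hκ₁⟩
  refine measurable_measure.mpr fun s hs => ?_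
  have hmap : (fun a => (κ a).map (g a) s)
      = fun a => K a (Prod.mk a ⁻¹' ((fun q => g q.1 q.2) ⁻¹' s)) :=
    funext fun a => map_apply (hg.comp measurable_prodMk_left) hs
  rw [hmap]
  exact ProbabilityTheory.Kernel.measurable_kernel_prodMk_left (hg hs)

end MeasureTheory.Measure

theorem Fin.sum_ite_le_eq_sum_range {M : Type*} [AddCommMonoid M] (g : ℕ → M) (T₀ T : ℕ) :
    ∑ i : Fin (T₀ + T), (if T₀ ≤ (i : ℕ) then g i else 0) = ∑ j ∈ Finset.range T, g (T₀ + j) := by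
  rw [Fin.sum_univ_eq_sum_range (fun i => if T₀ ≤ i then g i else 0), Finset.sum_range_add,
    Finset.sum_eq_zero fun i hi => if_neg (by simpa using hi), zero_add]
  simp

theorem sum_range_pow_add_le {r : ℝ} (h₀ : 0 ≤ r) (h₁ : r < 1) (m T : ℕ) :
    ∑ j ∈ Finset.range T, r ^ (m + j) ≤ r ^ m / (1 - r) := by
  simpa [Finset.sum_Ico_eq_sum_range] using geom_sum_Ico_le_of_lt_one (m := m) (n := m + T) h₀ h₁

theorem abs_mean_sub_le_mean_abs_sub {T : ℕ} (hT : T ≠ 0) (a : ℕ → ℝ) (b : ℝ) :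
    |1 / (T : ℝ) * ∑ j ∈ Finset.range T, a j - b|
      ≤ 1 / (T : ℝ) * ∑ j ∈ Finset.range T, |a j - b| := by
  have hb : b = 1 / (T : ℝ) * ∑ _j ∈ Finset.range T, b := by
    rw [Finset.sum_const, Finset.card_range, nsmul_eq_mul]
    field_simp
  rw [hb, ← mul_sub, ← Finset.sum_sub_distrib, abs_mul, abs_of_nonneg (by positivity), ← hb]
  gcongr
  exact Finset.abs_sum_le_sum_abs _ _

section Lipschitz

variable [OpensMeasurableSpace X] {μ ν : Measure X}

theorem integrable_dist_of_lintegral_edist_ne_top (y : X) (hμ : ∫⁻ z, edist y z ∂μ ≠ ⊤) :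
    Integrable (dist y) μ := by
  refine ⟨(continuous_const.dist continuous_id).aestronglyMeasurable, ?_⟩
  simpa [hasFiniteIntegral_iff_enorm, Real.enorm_eq_ofReal dist_nonneg, ← edist_dist]
    using hμ.lt_top

theorem LipschitzWith.integrable_of_lintegral_edist_ne_top [IsFiniteMeasure μ] {f : X → ℝ}
    {K : ℝ≥0} (hf : LipschitzWith K f) (y : X) (hμ : ∫⁻ z, edist y z ∂μ ≠ ⊤) :
    Integrable f μ := by
  refine ((integrable_const |f y|).add
    ((integrable_dist_of_lintegral_edist_ne_top y hμ).const_mul K)).mono'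
    hf.continuous.aestronglyMeasurable (ae_of_all _ fun z => ?_)
  have h := hf.dist_le_mul z y
  rw [Real.dist_eq, dist_comm] at h
  rw [Real.norm_eq_abs, Pi.add_apply]
  linarith [abs_sub_abs_le_abs_sub (f z) (f y)]

end Lipschitz

section LipNorm

variable {Y : Type*} [MetricSpace Y]

theorem div_dist_le_lipNorm {f : Y → ℝ} (hf : ∃ K : ℝ≥0, LipschitzWith K f) {a b : Y}
    (hab : a ≠ b) : |f a - f b| / dist a b ≤ lipNorm f := by
  obtain ⟨K, hK⟩ := hf
  refine le_csInf ⟨K, fun x y => ?_⟩ fun L hL => (div_le_iff₀ (dist_pos.2 hab)).2 (hL a b)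
  simpa [Real.dist_eq] using hK.dist_le_mul x y

theorem lipNorm_nonneg {f : Y → ℝ} (hf : ∃ K : ℝ≥0, LipschitzWith K f) : 0 ≤ lipNorm f := by
  by_cases h : ∃ a b : Y, a ≠ b
  · obtain ⟨a, b, hab⟩ := h
    exact (div_nonneg (abs_nonneg _) dist_nonneg).trans (div_dist_le_lipNorm hf hab)
  · push Not at h
    have huniv : {K : ℝ | ∀ x y : Y, |f x - f y| ≤ K * dist x y} = Set.univ :=
      Set.eq_univ_of_forall fun K x y => by simp [h x y]
    rw [lipNorm, huniv, Real.sInf_of_not_bddBelow not_bddBelow_univ]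

theorem lipschitzWith_lipNorm {f : Y → ℝ} (hf : ∃ K : ℝ≥0, LipschitzWith K f) :
    LipschitzWith (lipNorm f).toNNReal f := by
  refine LipschitzWith.of_dist_le_mul fun a b => ?_
  rw [Real.coe_toNNReal _ (lipNorm_nonneg hf), Real.dist_eq]
  rcases eq_or_ne a b with rfl | hab
  · simp
  · exact (div_le_iff₀ (dist_pos.2 hab)).1 (div_dist_le_lipNorm hf hab)

end LipNorm

section Wasserstein

variable [OpensMeasurableSpace X] {μ ν : Measure X}

theorem ofReal_abs_integral_sub_le_of_coupling {ξ : Measure (X × X)}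
    (hξ₁ : ξ.map Prod.fst = μ) (hξ₂ : ξ.map Prod.snd = ν) {g : X → ℝ} {K : ℝ≥0}
    (hg : LipschitzWith K g) (hμ : Integrable g μ) (hν : Integrable g ν) :
    ENNReal.ofReal |∫ z, g z ∂μ - ∫ z, g z ∂ν| ≤ K * ∫⁻ p, edist p.1 p.2 ∂ξ := by
  subst hξ₁ hξ₂
  have hgm := hg.continuous.measurable
  rw [integrable_map_measure hgm.aestronglyMeasurable measurable_fst.aemeasurable] at hμ
  rw [integrable_map_measure hgm.aestronglyMeasurable measurable_snd.aemeasurable] at hν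
  rw [integral_map measurable_fst.aemeasurable hgm.aestronglyMeasurable,
    integral_map measurable_snd.aemeasurable hgm.aestronglyMeasurable,
    ← integral_sub (f := fun p : X × X => g p.1) (g := fun p => g p.2) hμ hν,
    ← Real.enorm_eq_ofReal_abs, ← lintegral_const_mul' _ _ ENNReal.coe_ne_top]
  refine (enorm_integral_le_lintegral_enorm _).trans (lintegral_mono fun p => ?_)
  rw [← edist_eq_enorm_sub]
  exact hg.edist_le_mul p.1 p.2

theorem ofReal_abs_integral_sub_le_mul_W1 [IsProbabilityMeasure μ] [IsProbabilityMeasure ν]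
    {g : X → ℝ} {K : ℝ≥0} (hg : LipschitzWith K g) (hμ : Integrable g μ)
    (hν : Integrable g ν) :
    ENNReal.ofReal |∫ z, g z ∂μ - ∫ z, g z ∂ν| ≤ K * W1 μ ν := by
  rcases eq_or_ne K 0 with rfl | hK
  · simpa using
      ofReal_abs_integral_sub_le_of_coupling (ξ := μ.prod ν) (by simp) (by simp) hg hμ hν
  · simp only [W1, ENNReal.mul_iInf_of_ne (ENNReal.coe_ne_zero.2 hK) ENNReal.coe_ne_top]
    exact le_iInf fun ξ => le_iInf fun hξ₁ => le_iInf fun hξ₂ =>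
      ofReal_abs_integral_sub_le_of_coupling hξ₁ hξ₂ hg hμ hν

theorem lintegral_edist_le_add_W1 (y : X) :
    ∫⁻ z, edist y z ∂μ ≤ ∫⁻ z, edist y z ∂ν + W1 μ ν := by
  have hy : Measurable (edist y) := (continuous_const.edist continuous_id).measurable
  simp only [W1, ENNReal.add_iInf]
  refine le_iInf fun ξ => le_iInf fun hξ₁ => le_iInf fun hξ₂ => ?_
  subst hξ₁ hξ₂
  rw [lintegral_map hy measurable_fst, lintegral_map hy measurable_snd,
    ← lintegral_add_left (f := fun p : X × X => edist y p.2) (hy.comp measurable_snd)]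
  exact lintegral_mono fun p => (edist_triangle y p.2 p.1).trans_eq (by rw [edist_comm p.2])

end Wasserstein

theorem PosCurvature.W1_le {P : X → Measure X} {κ : ℝ} (h : PosCurvature P κ) (x y : X) :
    W1 (P x) (P y) ≤ (1 - κ).toNNReal * edist x y := by
  refine (h x y).trans_eq ?_
  rw [ENNReal.ofReal_mul' dist_nonneg, ← edist_dist]
  rfl

structure IsW1LipschitzKernel (P : X → Measure X) (c : ℝ≥0) : Prop where
  measurable : Measurable P
  isProbabilityMeasure : ∀ x, IsProbabilityMeasure (P x)
  lintegral_edist_ne_top : ∀ x y, ∫⁻ z, edist y z ∂P x ≠ ⊤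
  W1_le : ∀ x y, W1 (P x) (P y) ≤ c * edist x y

section MarkovChain

variable {α : Type*} [MeasurableSpace α] {P : α → Measure α}

theorem measurable_stepN (hP : Measurable P) : ∀ n, Measurable (stepN P n)
  | 0 => Measure.measurable_dirac
  | n + 1 => (Measure.measurable_bind' hP).comp (measurable_stepN hP n)

theorem isProbabilityMeasure_stepN (hP : Measurable P) (hP₁ : ∀ x, IsProbabilityMeasure (P x))
    (x : α) : ∀ n, IsProbabilityMeasure (stepN P n x)
  | 0 => Measure.dirac.isProbabilityMeasure
  | n + 1 =>
    haveI := isProbabilityMeasure_stepN hP hP₁ x n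
    Measure.isProbabilityMeasure_bind hP hP₁

theorem stepN_succ_eq_bind (hP : Measurable P) (n : ℕ) (x : α) :
    stepN P (n + 1) x = (P x).bind (stepN P n) := by
  induction n generalizing x with
  | zero => exact (Measure.dirac_bind hP x).trans Measure.bind_dirac.symm
  | succ n ih =>
    change (stepN P (n + 1) x).bind P = _
    rw [ih, Measure.bind_bind (measurable_stepN hP n).aemeasurable hP.aemeasurable]
    rfl

@[simp]
theorem avgN_zero [MeasurableSingletonClass α] (f : α → ℝ) : avgN P 0 f = f :=
  funext fun x => integral_dirac f x

theorem measurable_finCons (n : ℕ) :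
    Measurable fun q : α × (Fin n → α) => (Fin.cons q.1 q.2 : Fin (n + 1) → α) := by
  refine measurable_pi_iff.mpr fun i => Fin.cases ?_ (fun j => ?_) i
  · simpa only [Fin.cons_zero] using measurable_fst
  · simp only [Fin.cons_succ]
    exact measurable_snd.eval

-- Proved jointly: measurability of `y ↦ (pathLaw P n y).map (Fin.cons y)` uses that
-- `pathLaw P n` is a Markov kernel.
theorem measurable_pathLaw_and_isProbabilityMeasure (hP : Measurable P)
    (hP₁ : ∀ x, IsProbabilityMeasure (P x)) :
    ∀ n, Measurable (pathLaw P n) ∧ ∀ x, IsProbabilityMeasure (pathLaw P n x)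
  | 0 => ⟨measurable_const, fun _ => Measure.dirac.isProbabilityMeasure⟩
  | n + 1 => by
    obtain ⟨hm, hp⟩ := measurable_pathLaw_and_isProbabilityMeasure hP hP₁ n
    have hcons := Measure.measurable_map_of_measurable_prod hm hp (measurable_finCons n)
    refine ⟨(Measure.measurable_bind' hcons).comp hP, fun x => ?_⟩
    have := hP₁ x
    exact Measure.isProbabilityMeasure_bind hcons fun y =>
      Measure.isProbabilityMeasure_map
        ((measurable_finCons n).comp measurable_prodMk_left).aemeasurable

theorem map_eval_pathLaw (hP : Measurable P) (hP₁ : ∀ x, IsProbabilityMeasure (P x)) (n : ℕ)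
    (x : α) (i : Fin n) : (pathLaw P n x).map (fun p => p i) = stepN P (i + 1) x := by
  induction n generalizing x with
  | zero => exact i.elim0
  | succ n ih =>
    obtain ⟨hm, hp⟩ := measurable_pathLaw_and_isProbabilityMeasure hP hP₁ n
    have hcons := Measure.measurable_map_of_measurable_prod hm hp (measurable_finCons n)
    have hmap : ∀ y, ((pathLaw P n y).map fun p => (Fin.cons y p : Fin (n + 1) → α)).map
        (fun p => p i) = (pathLaw P n y).map fun p => (Fin.cons y p : Fin (n + 1) → α) i :=
      fun y => Measure.map_map (measurable_pi_apply i)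
        ((measurable_finCons n).comp measurable_prodMk_left)
    simp only [pathLaw]
    rw [Measure.map_bind hcons (measurable_pi_apply i)]
    simp only [hmap]
    cases i using Fin.cases with
    | zero =>
      simp only [Fin.cons_zero, Measure.map_const, measure_univ, one_smul, Measure.bind_dirac]
      exact (Measure.dirac_bind hP x).symm
    | succ j =>
      simp only [Fin.cons_succ, ih, Fin.val_succ]
      exact (stepN_succ_eq_bind hP (j + 1) x).symm

end MarkovChain

namespace IsW1LipschitzKernel

variable [OpensMeasurableSpace X] {P : X → Measure X} {c K : ℝ≥0} {f : X → ℝ}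
  {π : Measure X} [IsProbabilityMeasure π]

theorem lintegral_edist_stepN_ne_top (hP : IsW1LipschitzKernel P c) (n : ℕ) (x y : X) :
    ∫⁻ z, edist y z ∂stepN P n x ≠ ⊤ := by
  have hy : Measurable (edist y) := (continuous_const.edist continuous_id).measurable
  induction n with
  | zero =>
    rw [stepN, lintegral_dirac' x hy]
    exact edist_ne_top y x
  | succ n ih =>
    have := isProbabilityMeasure_stepN hP.measurable hP.isProbabilityMeasure x n
    have hmoment : ∀ w, ∫⁻ z, edist y z ∂P w ≤ ∫⁻ z, edist y z ∂P y + c * edist y w :=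
      fun w => (lintegral_edist_le_add_W1 (ν := P y) y).trans
        (by rw [edist_comm y w]; gcongr; exact hP.W1_le w y)
    rw [stepN, Measure.lintegral_bind hP.measurable.aemeasurable hy.aemeasurable]
    refine ne_top_of_le_ne_top ?_ (lintegral_mono hmoment)
    rw [lintegral_add_left measurable_const, lintegral_const_mul' _ _ ENNReal.coe_ne_top,
      lintegral_const, measure_univ, mul_one]
    exact ENNReal.add_ne_top.2
      ⟨hP.lintegral_edist_ne_top y y, ENNReal.mul_ne_top ENNReal.coe_ne_top ih⟩

theorem integrable_stepN (hP : IsW1LipschitzKernel P c) (hf : LipschitzWith K f) (n : ℕ)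
    (x : X) : Integrable f (stepN P n x) :=
  haveI := isProbabilityMeasure_stepN hP.measurable hP.isProbabilityMeasure x n
  hf.integrable_of_lintegral_edist_ne_top x (hP.lintegral_edist_stepN_ne_top n x x)

theorem lipschitzWith_integral (hP : IsW1LipschitzKernel P c) (hf : LipschitzWith K f) :
    LipschitzWith (c * K) fun x => ∫ z, f z ∂P x := fun x y => by
  have := hP.isProbabilityMeasure x
  have := hP.isProbabilityMeasure y
  rw [edist_dist, Real.dist_eq]
  calc ENNReal.ofReal |∫ z, f z ∂P x - ∫ z, f z ∂P y|
      ≤ K * W1 (P x) (P y) := ofReal_abs_integral_sub_le_mul_W1 hf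
        (hf.integrable_of_lintegral_edist_ne_top x (hP.lintegral_edist_ne_top x x))
        (hf.integrable_of_lintegral_edist_ne_top y (hP.lintegral_edist_ne_top y y))
    _ ≤ K * (c * edist x y) := by gcongr; exact hP.W1_le x y
    _ = ↑(c * K) * edist x y := by push_cast; ring

theorem avgN_succ (hP : IsW1LipschitzKernel P c) (hf : LipschitzWith K f) (n : ℕ) (x : X) :
    avgN P (n + 1) f x = ∫ y, avgN P n f y ∂P x := by
  have hint := hP.integrable_stepN hf (n + 1) x
  rw [stepN_succ_eq_bind hP.measurable] at hint
  rw [avgN, stepN_succ_eq_bind hP.measurable,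
    Measure.integral_bind (measurable_stepN hP.measurable n) hint]
  rfl

theorem lipschitzWith_avgN (hP : IsW1LipschitzKernel P c) (hf : LipschitzWith K f) (n : ℕ) :
    LipschitzWith (c ^ n * K) (avgN P n f) := by
  induction n with
  | zero => simpa using hf
  | succ n ih =>
    rw [show avgN P (n + 1) f = fun x => ∫ y, avgN P n f y ∂P x from
      funext (hP.avgN_succ hf n), pow_succ', mul_assoc]
    exact hP.lipschitzWith_integral ih

theorem integral_avgN_of_bind_eq (hP : IsW1LipschitzKernel P c) (hπ : π.bind P = π) (y : X)
    (hπy : ∫⁻ z, edist y z ∂π ≠ ⊤) (hf : LipschitzWith K f) (n : ℕ) :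
    ∫ x, avgN P n f x ∂π = ∫ x, f x ∂π := by
  induction n with
  | zero => simp
  | succ n ih =>
    have hint : Integrable (avgN P n f) (π.bind P) := by
      rw [hπ]
      exact (hP.lipschitzWith_avgN hf n).integrable_of_lintegral_edist_ne_top y hπy
    calc ∫ x, avgN P (n + 1) f x ∂π
        = ∫ x, ∫ y, avgN P n f y ∂P x ∂π := integral_congr_ae (ae_of_all _ (hP.avgN_succ hf n))
      _ = ∫ x, avgN P n f x ∂π.bind P := (Measure.integral_bind hP.measurable hint).symm
      _ = ∫ x, f x ∂π := by rw [hπ, ih]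

theorem abs_avgN_sub_integral_le (hP : IsW1LipschitzKernel P c) (hπ : π.bind P = π) (x : X)
    (hπx : ∫⁻ z, edist x z ∂π ≠ ⊤) (hf : LipschitzWith K f) (n : ℕ) :
    |avgN P n f x - ∫ y, f y ∂π| ≤ c ^ n * K * ecc π x := by
  have hlip := hP.lipschitzWith_avgN hf n
  have hint := hlip.integrable_of_lintegral_edist_ne_top x hπx
  rw [← hP.integral_avgN_of_bind_eq hπ x hπx hf n]
  calc |avgN P n f x - ∫ y, avgN P n f y ∂π|
      = |∫ y, (avgN P n f x - avgN P n f y) ∂π| := by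
        rw [integral_sub (integrable_const _) hint, integral_const, probReal_univ, one_smul]
    _ ≤ ∫ y, |avgN P n f x - avgN P n f y| ∂π := abs_integral_le_integral_abs
    _ ≤ ∫ y, (c ^ n * K : ℝ≥0) * dist x y ∂π :=
        integral_mono ((integrable_const _).sub hint).abs
          ((integrable_dist_of_lintegral_edist_ne_top x hπx).const_mul _)
          fun y => by simpa only [Real.dist_eq] using hlip.dist_le_mul x y
    _ = c ^ n * K * ecc π x := by rw [integral_const_mul, ecc]; push_cast; rfl

theorem empExp_eq (hP : IsW1LipschitzKernel P c) (hf : LipschitzWith K f) (T₀ T : ℕ) (x : X) :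
    empExp P f T₀ T x = 1 / (T : ℝ) * ∑ j ∈ Finset.range T, avgN P (T₀ + j + 1) f x := by
  have hmarg := map_eval_pathLaw hP.measurable hP.isProbabilityMeasure (T₀ + T) x
  have hfm := hf.continuous.measurable
  have hint : ∀ i : Fin (T₀ + T), Integrable (fun p => f (p i)) (pathLaw P (T₀ + T) x) :=
    fun i => (integrable_map_measure hfm.aestronglyMeasurable
      (measurable_pi_apply i).aemeasurable).1 (by rw [hmarg]; exact hP.integrable_stepN hf _ x)
  have hterm : ∀ i : Fin (T₀ + T), ∫ p, f (p i) ∂pathLaw P (T₀ + T) x = avgN P (i + 1) f x :=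
    fun i => by
      rw [← integral_map (measurable_pi_apply i).aemeasurable hfm.aestronglyMeasurable, hmarg]
      rfl
  unfold empExp empMean
  rw [integral_const_mul, integral_finsetSum _ fun i _ => ?_,
    ← Fin.sum_ite_le_eq_sum_range (fun i => avgN P (i + 1) f x)]
  · refine congrArg _ (Finset.sum_congr rfl fun i _ => ?_)
    split_ifs
    · exact hterm i
    · exact integral_zero _ _
  · split_ifs
    · exact hint i
    · exact integrable_zero _ _ _

end IsW1LipschitzKernel

theorem bias_of_empirical_means_general
    [BorelSpace X]
    (P : X → Measure X) (hPmeas : Measurable P)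
    (hPprob : ∀ x, IsProbabilityMeasure (P x))
    (hPmom : ∀ x y : X, (∫⁻ z, edist y z ∂(P x)) ≠ ⊤)
    (κ : ℝ) (hκ0 : 0 < κ) (hκ1 : κ ≤ 1) (hcurv : PosCurvature P κ)
    (π : Measure X) (hπprob : IsProbabilityMeasure π) (hπinv : π.bind P = π)
    (hπmom : ∀ y : X, (∫⁻ z, edist y z ∂π) ≠ ⊤)
    (f : X → ℝ) (hf : ∃ K : ℝ≥0, LipschitzWith K f)
    (x : X) (T₀ T : ℕ) (hT : 1 ≤ T) :
    |empExp P f T₀ T x - ∫ y, f y ∂π|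
      ≤ ((1 - κ) ^ (T₀ + 1) / (κ * T)) * ecc π x * lipNorm f := by
  have hP : IsW1LipschitzKernel P (1 - κ).toNNReal := ⟨hPmeas, hPprob, hPmom, hcurv.W1_le⟩
  have hc : ((1 - κ).toNNReal : ℝ) = 1 - κ := Real.coe_toNNReal _ (by linarith)
  have hL : ((lipNorm f).toNNReal : ℝ) = lipNorm f := Real.coe_toNNReal _ (lipNorm_nonneg hf)
  have hbias : ∀ j, |avgN P (T₀ + j + 1) f x - ∫ y, f y ∂π|
      ≤ (1 - κ) ^ (T₀ + 1 + j) * (ecc π x * lipNorm f) := fun j => by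
    have := hP.abs_avgN_sub_integral_le hπinv x (hπmom x) (lipschitzWith_lipNorm hf) (T₀ + j + 1)
    rw [hc, hL] at this
    exact this.trans_eq (by ring_nf)
  have hgeom : ∑ j ∈ Finset.range T, (1 - κ) ^ (T₀ + 1 + j) ≤ (1 - κ) ^ (T₀ + 1) / κ := by
    simpa using sum_range_pow_add_le (by linarith : 0 ≤ 1 - κ) (by linarith) (T₀ + 1) T
  have hEL : 0 ≤ ecc π x * lipNorm f :=
    mul_nonneg (integral_nonneg fun _ => dist_nonneg) (lipNorm_nonneg hf)
  rw [hP.empExp_eq (lipschitzWith_lipNorm hf)]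
  calc _ ≤ 1 / (T : ℝ) * ∑ j ∈ Finset.range T, |avgN P (T₀ + j + 1) f x - ∫ y, f y ∂π| :=
        abs_mean_sub_le_mean_abs_sub (by omega) _ _
    _ ≤ 1 / (T : ℝ) * ∑ j ∈ Finset.range T, (1 - κ) ^ (T₀ + 1 + j) * (ecc π x * lipNorm f) := by
        gcongr with j; exact hbias j
    _ ≤ 1 / (T : ℝ) * ((1 - κ) ^ (T₀ + 1) / κ * (ecc π x * lipNorm f)) := by
        rw [← Finset.sum_mul]; gcongr
    _ = _ := by field_simp

/-- **Bias of empirical means** (Proposition 1 of Joulin–Ollivier):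
under positive Ricci curvature `κ ∈ (0,1]`, for every Lipschitz `f`, starting point `x`,
integers `T₀ ≥ 0` and `T ≥ 1`,
`|E_x π̂(f) − π(f)| ≤ ((1−κ)^{T₀+1} / (κ T)) E(x) ‖f‖_Lip`. -/
theorem bias_of_empirical_means
    [CompleteSpace X] [SecondCountableTopology X] [BorelSpace X]
    (P : X → Measure X) (hPmeas : Measurable P)
    (hPprob : ∀ x, IsProbabilityMeasure (P x))
    (hPmom : ∀ x y : X, (∫⁻ z, edist y z ∂(P x)) ≠ ⊤)
    (κ : ℝ) (hκ0 : 0 < κ) (hκ1 : κ ≤ 1) (hcurv : PosCurvature P κ)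
    (π : Measure X) (hπprob : IsProbabilityMeasure π) (hπinv : π.bind P = π)
    (hπmom : ∀ y : X, (∫⁻ z, edist y z ∂π) ≠ ⊤)
    (f : X → ℝ) (hf : ∃ K : ℝ≥0, LipschitzWith K f)
    (x : X) (T₀ T : ℕ) (hT : 1 ≤ T) :
    |empExp P f T₀ T x - ∫ y, f y ∂π|
      ≤ ((1 - κ) ^ (T₀ + 1) / (κ * T)) * ecc π x * lipNorm f :=
  bias_of_empirical_means_general P hPmeas hPprob hPmom κ hκ0 hκ1 hcurv π hπprob hπinv hπmom f hf x
    T₀ T hT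

end
end

section
/- Curvature and diffusion constant of the binomial Markov chain: fix an integer d ≥ 1 and a real λ with 0 < λ < d, and consider the Markov chain on {0, 1, …, d} (with the usual distance |x−y|) with transition probabilities P_x(x+1) = (λ/d)(1 − x/d), P_x(x−1) = (1 − λ/d)(x/d), and P_x(x) = λx/d² + (1 − λ/d)(1 − x/d). Then this chain has positive Ricci curvature κ ≥ 1/d, i.e., W₁(P_x, P_y) ≤ (1 − 1/d)|x − y| for all x, y ∈ {0,…,d}, and its coarse diffusion constant satisfies σ(x)² ≤ (λ + x)/d for every x ∈ {0,…,d}. -/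
open MeasureTheory ENNReal
open scoped NNReal

noncomputable section

variable {X : Type*} [MetricSpace X] [MeasurableSpace X]

/-- Transition kernel of the binomial Markov chain on `{0, 1, …, d}` (viewed inside `ℕ`)
with parameters `d` and `λ/d`. -/
def binomialKernel (d : ℕ) (lam : ℝ) : ℕ → Measure ℕ := fun x =>
  ENNReal.ofReal ((lam / d) * (1 - (x : ℝ) / d)) • Measure.dirac (x + 1)
    + ENNReal.ofReal ((1 - lam / d) * ((x : ℝ) / d)) • Measure.dirac (x - 1)
    + ENNReal.ofReal (lam * (x : ℝ) / (d : ℝ) ^ 2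
        + (1 - lam / d) * (1 - (x : ℝ) / d)) • Measure.dirac x

/-!
For `x ≤ y ≤ d` the kernels `P_x` and `P_y` admit a coupling carried by `{a ≤ b}`. On `ℕ` such
a coupling transports at cost exactly the difference of the means, and the mean of `P_x` is
`(1 - 1/d) x + λ/d`, so `W₁(P_x, P_y) ≤ (1 - 1/d)(y - x)`. If `y ≥ x + 2` the independent
coupling will do, since `P_x` and `P_y` are carried by `[x - 1, x + 1]` and `[y - 1, y + 1]`; if
`y = x + 1` an explicit five-atom coupling works, and if `y = x` the diagonal one.

For a three-atom law `p δ_{x+1} + q δ_{x-1} + r δ_x` one has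
`σ² ≤ 4pq + pr + qr = (p + q) - (p - q)² ≤ p + q`, and here `p + q = (λ + x)/d - 2λx/d²`.
-/

theorem W1_le_lintegral_of_coupling {μ ν : Measure X} (ξ : Measure (X × X))
    (hfst : ξ.map Prod.fst = μ) (hsnd : ξ.map Prod.snd = ν) :
    W1 μ ν ≤ ∫⁻ p, edist p.1 p.2 ∂ξ :=
  iInf_le_of_le ξ <| iInf_le_of_le hfst <| iInf_le _ hsnd

theorem W1_comm (μ ν : Measure X) : W1 μ ν = W1 ν μ := by
  have swap_le : ∀ μ ν : Measure X, W1 μ ν ≤ W1 ν μ := by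
    intro μ ν
    refine le_iInf fun ξ => le_iInf fun hfst => le_iInf fun hsnd => ?_
    let e : X × X ≃ᵐ X × X := MeasurableEquiv.prodComm
    refine (W1_le_lintegral_of_coupling (ξ.map e) ?_ ?_).trans_eq ?_
    · rwa [Measure.map_map measurable_fst e.measurable]
    · rwa [Measure.map_map measurable_snd e.measurable]
    · rw [lintegral_map_equiv]
      exact lintegral_congr fun p => edist_comm _ _
  exact le_antisymm (swap_le μ ν) (swap_le ν μ)

theorem Nat.edist_eq_sub {a b : ℕ} (h : a ≤ b) : edist a b = (b : ℝ≥0∞) - a := by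
  rw [edist_dist, Nat.dist_eq, abs_sub_comm, abs_of_nonneg (sub_nonneg.mpr (by exact_mod_cast h)),
    ENNReal.ofReal_sub _ (Nat.cast_nonneg _), ENNReal.ofReal_natCast, ENNReal.ofReal_natCast]

theorem Nat.W1_le_of_monotone_coupling {μ ν : Measure ℕ} (ξ : Measure (ℕ × ℕ))
    (hfst : ξ.map Prod.fst = μ) (hsnd : ξ.map Prod.snd = ν) (hle : ∀ᵐ p ∂ξ, p.1 ≤ p.2)
    (hμ : ∫⁻ n, (n : ℝ≥0∞) ∂μ ≠ ∞) :
    W1 μ ν ≤ ∫⁻ n, (n : ℝ≥0∞) ∂ν - ∫⁻ n, (n : ℝ≥0∞) ∂μ := by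
  have hcoe : Measurable fun n : ℕ => (n : ℝ≥0∞) := measurable_from_nat
  subst hfst hsnd
  rw [lintegral_map hcoe measurable_fst] at hμ
  rw [lintegral_map hcoe measurable_snd, lintegral_map hcoe measurable_fst,
    ← lintegral_sub (measurable_of_countable _) hμ (hle.mono fun p hp => Nat.cast_le.mpr hp)]
  exact (W1_le_lintegral_of_coupling ξ rfl rfl).trans_eq
    (lintegral_congr_ae (hle.mono fun p hp => Nat.edist_eq_sub hp))

section ThreeAtoms

variable {α : Type*} [MeasurableSpace α]

theorem ae_smul_dirac [DiscreteMeasurableSpace α] {p : α → Prop} {a : α} (ha : p a)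
    (c : ℝ≥0∞) : ∀ᵐ x ∂(c • Measure.dirac a), p x :=
  Measure.ae_smul_measure ((ae_dirac_iff .of_discrete).2 ha) c

variable [MeasurableSingletonClass α]

theorem integral_smul_dirac_add_three (f : α → ℝ) {p q r : ℝ} (hp : 0 ≤ p) (hq : 0 ≤ q)
    (hr : 0 ≤ r) (a b c : α) :
    ∫ z, f z ∂(ENNReal.ofReal p • Measure.dirac a + ENNReal.ofReal q • Measure.dirac b
      + ENNReal.ofReal r • Measure.dirac c) = p * f a + q * f b + r * f c := by
  have hint : ∀ (s : ℝ) (u : α), Integrable f (ENNReal.ofReal s • Measure.dirac u) :=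
    fun s u => (integrable_dirac enorm_lt_top).smul_measure ENNReal.ofReal_ne_top
  rw [integral_add_measure ((hint p a).add_measure (hint q b)) (hint r c),
    integral_add_measure (hint p a) (hint q b)]
  simp only [integral_smul_measure, integral_dirac, ENNReal.toReal_ofReal hp,
    ENNReal.toReal_ofReal hq, ENNReal.toReal_ofReal hr, smul_eq_mul]

theorem lintegral_smul_dirac_add_three (f : α → ℝ≥0∞) (p q r : ℝ≥0∞) (a b c : α) :
    ∫⁻ z, f z ∂(p • Measure.dirac a + q • Measure.dirac b + r • Measure.dirac c)
      = p * f a + q * f b + r * f c := by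
  simp only [lintegral_add_measure, lintegral_smul_measure, lintegral_dirac, smul_eq_mul]

end ThreeAtoms

theorem half_integral_integral_dist_sq_three [MeasurableSingletonClass X] {p q r : ℝ}
    (hp : 0 ≤ p) (hq : 0 ≤ q) (hr : 0 ≤ r) (a b c : X) :
    (1 / 2) * ∫ y, ∫ z, dist y z ^ 2 ∂(ENNReal.ofReal p • Measure.dirac a
        + ENNReal.ofReal q • Measure.dirac b + ENNReal.ofReal r • Measure.dirac c)
      ∂(ENNReal.ofReal p • Measure.dirac a + ENNReal.ofReal q • Measure.dirac b
        + ENNReal.ofReal r • Measure.dirac c)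
      = p * q * dist a b ^ 2 + p * r * dist a c ^ 2 + q * r * dist b c ^ 2 := by
  simp only [integral_smul_dirac_add_three _ hp hq hr, dist_self, dist_comm b a, dist_comm c a,
    dist_comm c b]
  ring

section BinomialChain

variable {d : ℕ} {lam : ℝ}

def binomialUp (d : ℕ) (lam : ℝ) (x : ℕ) : ℝ := lam / d * (1 - x / d)

def binomialDown (d : ℕ) (lam : ℝ) (x : ℕ) : ℝ := (1 - lam / d) * (x / d)

def binomialStay (d : ℕ) (lam : ℝ) (x : ℕ) : ℝ := lam * x / d ^ 2 + (1 - lam / d) * (1 - x / d)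

theorem binomialKernel_eq (x : ℕ) :
    binomialKernel d lam x = ENNReal.ofReal (binomialUp d lam x) • Measure.dirac (x + 1)
      + ENNReal.ofReal (binomialDown d lam x) • Measure.dirac (x - 1)
      + ENNReal.ofReal (binomialStay d lam x) • Measure.dirac x :=
  rfl

theorem binomialUp_add_binomialDown_add_binomialStay (x : ℕ) :
    binomialUp d lam x + binomialDown d lam x + binomialStay d lam x = 1 := by
  simp only [binomialUp, binomialDown, binomialStay]
  ring

theorem binomialUp_nonneg (h0 : 0 ≤ lam) {x : ℕ} (hx : x ≤ d) : 0 ≤ binomialUp d lam x := by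
  have : (x : ℝ) / d ≤ 1 := div_le_one_of_le₀ (by exact_mod_cast hx) d.cast_nonneg
  exact mul_nonneg (by positivity) (by linarith)

theorem binomialDown_nonneg (h1 : lam ≤ d) (x : ℕ) : 0 ≤ binomialDown d lam x := by
  have : lam / d ≤ 1 := div_le_one_of_le₀ h1 d.cast_nonneg
  exact mul_nonneg (by linarith) (by positivity)

theorem binomialStay_nonneg (h0 : 0 ≤ lam) (h1 : lam ≤ d) {x : ℕ} (hx : x ≤ d) :
    0 ≤ binomialStay d lam x := by
  have hlam : lam / d ≤ 1 := div_le_one_of_le₀ h1 d.cast_nonneg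
  have hx' : (x : ℝ) / d ≤ 1 := div_le_one_of_le₀ (by exact_mod_cast hx) d.cast_nonneg
  exact add_nonneg (by positivity) (mul_nonneg (by linarith) (by linarith))

theorem isProbabilityMeasure_binomialKernel (h0 : 0 ≤ lam) (h1 : lam ≤ d) {x : ℕ}
    (hx : x ≤ d) : IsProbabilityMeasure (binomialKernel d lam x) := by
  constructor
  simp only [binomialKernel_eq, Measure.coe_add, Pi.add_apply, Measure.smul_apply,
    measure_univ, smul_eq_mul, mul_one]
  rw [← ENNReal.ofReal_add (binomialUp_nonneg h0 hx) (binomialDown_nonneg h1 x),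
    ← ENNReal.ofReal_add (by linarith [binomialUp_nonneg h0 hx, binomialDown_nonneg h1 x])
      (binomialStay_nonneg h0 h1 hx),
    binomialUp_add_binomialDown_add_binomialStay, ENNReal.ofReal_one]

theorem ae_binomialKernel (x : ℕ) : ∀ᵐ n ∂binomialKernel d lam x, x - 1 ≤ n ∧ n ≤ x + 1 := by
  simp only [binomialKernel_eq, ae_add_measure_iff]
  exact ⟨⟨ae_smul_dirac (by omega) _, ae_smul_dirac (by omega) _⟩, ae_smul_dirac (by omega) _⟩

theorem lintegral_natCast_binomialKernel (h0 : 0 ≤ lam) (h1 : lam ≤ d) {x : ℕ} (hx : x ≤ d) :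
    ∫⁻ n, (n : ℝ≥0∞) ∂binomialKernel d lam x = ENNReal.ofReal ((1 - 1 / d) * x + lam / d) := by
  have hup := binomialUp_nonneg h0 hx
  have hdown := binomialDown_nonneg h1 x
  have hstay := binomialStay_nonneg h0 h1 hx
  -- the `x - 1` atom carries no mass when `x = 0`
  have hdown_pred :
      binomialDown d lam x * ((x - 1 : ℕ) : ℝ) = binomialDown d lam x * (x - 1) := by
    rcases x with _ | x <;> simp [binomialDown]
  rw [binomialKernel_eq, lintegral_smul_dirac_add_three, ← ENNReal.ofReal_natCast (x + 1),
    ← ENNReal.ofReal_natCast (x - 1), ← ENNReal.ofReal_natCast x, ← ENNReal.ofReal_mul hup,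
    ← ENNReal.ofReal_mul hdown, ← ENNReal.ofReal_mul hstay,
    ← ENNReal.ofReal_add (by positivity) (by positivity),
    ← ENNReal.ofReal_add (by positivity) (by positivity), hdown_pred]
  congr 1
  simp only [binomialUp, binomialDown, binomialStay]
  push_cast
  ring

/-- Puts mass `(1 - λ/d)/d + λ/d² = 1/d` on the diagonal and moves the two chains in parallel
otherwise. -/
def binomialSuccCoupling (d : ℕ) (lam : ℝ) (x : ℕ) : Measure (ℕ × ℕ) :=
  ENNReal.ofReal (binomialDown d lam x) • Measure.dirac (x - 1, x)
    + ENNReal.ofReal ((1 - lam / d) / d) • Measure.dirac (x, x)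
    + ENNReal.ofReal (binomialStay d lam x - (1 - lam / d) / d) • Measure.dirac (x, x + 1)
    + ENNReal.ofReal (lam / d ^ 2) • Measure.dirac (x + 1, x + 1)
    + ENNReal.ofReal (binomialUp d lam (x + 1)) • Measure.dirac (x + 1, x + 1 + 1)

theorem binomialStay_sub_nonneg (h0 : 0 ≤ lam) (h1 : lam ≤ d) {x : ℕ} (hx : x + 1 ≤ d) :
    0 ≤ binomialStay d lam x - (1 - lam / d) / d := by
  have hd : (0 : ℝ) < d := by exact_mod_cast (x.succ_pos.trans_le hx)
  have hlam : lam / d ≤ 1 := div_le_one_of_le₀ h1 hd.le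
  have hx' : (x : ℝ) + 1 ≤ d := by exact_mod_cast hx
  have key : binomialStay d lam x - (1 - lam / d) / d
      = lam * x / d ^ 2 + (1 - lam / d) * ((d - 1 - x) / d) := by
    simp only [binomialStay]
    field_simp
    ring
  rw [key]
  exact add_nonneg (by positivity) (mul_nonneg (by linarith) (div_nonneg (by linarith) hd.le))

theorem map_fst_binomialSuccCoupling (h0 : 0 ≤ lam) (h1 : lam ≤ d) {x : ℕ} (hx : x + 1 ≤ d) :
    (binomialSuccCoupling d lam x).map Prod.fst = binomialKernel d lam x := by
  have hw : 0 ≤ (1 - lam / d) / d :=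
    div_nonneg (by linarith [div_le_one_of_le₀ h1 d.cast_nonneg]) d.cast_nonneg
  have hstay : ENNReal.ofReal (binomialStay d lam x) = ENNReal.ofReal ((1 - lam / d) / d)
      + ENNReal.ofReal (binomialStay d lam x - (1 - lam / d) / d) := by
    rw [← ENNReal.ofReal_add hw (binomialStay_sub_nonneg h0 h1 hx), add_sub_cancel]
  have hup : ENNReal.ofReal (binomialUp d lam x)
      = ENNReal.ofReal (lam / d ^ 2) + ENNReal.ofReal (binomialUp d lam (x + 1)) := by
    rw [← ENNReal.ofReal_add (by positivity) (binomialUp_nonneg h0 hx)]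
    simp only [binomialUp]
    push_cast
    ring_nf
  simp only [binomialSuccCoupling, Measure.map_add _ _ measurable_fst, Measure.map_smul,
    Measure.map_dirac' measurable_fst]
  rw [binomialKernel_eq, hstay, hup, add_smul, add_smul]
  abel

theorem map_snd_binomialSuccCoupling (h0 : 0 ≤ lam) (h1 : lam ≤ d) {x : ℕ} (hx : x + 1 ≤ d) :
    (binomialSuccCoupling d lam x).map Prod.snd = binomialKernel d lam (x + 1) := by
  have hw : 0 ≤ (1 - lam / d) / d :=
    div_nonneg (by linarith [div_le_one_of_le₀ h1 d.cast_nonneg]) d.cast_nonneg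
  have hdown : ENNReal.ofReal (binomialDown d lam (x + 1))
      = ENNReal.ofReal (binomialDown d lam x) + ENNReal.ofReal ((1 - lam / d) / d) := by
    rw [← ENNReal.ofReal_add (binomialDown_nonneg h1 x) hw]
    simp only [binomialDown]
    push_cast
    ring_nf
  have hstay : ENNReal.ofReal (binomialStay d lam (x + 1))
      = ENNReal.ofReal (binomialStay d lam x - (1 - lam / d) / d)
        + ENNReal.ofReal (lam / d ^ 2) := by
    rw [← ENNReal.ofReal_add (binomialStay_sub_nonneg h0 h1 hx) (by positivity)]
    simp only [binomialStay]
    push_cast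
    ring_nf
  simp only [binomialSuccCoupling, Measure.map_add _ _ measurable_snd, Measure.map_smul,
    Measure.map_dirac' measurable_snd]
  rw [binomialKernel_eq, hdown, hstay, add_smul, add_smul, Nat.add_sub_cancel]
  abel

theorem ae_le_binomialSuccCoupling (x : ℕ) : ∀ᵐ p ∂binomialSuccCoupling d lam x, p.1 ≤ p.2 := by
  simp only [binomialSuccCoupling, ae_add_measure_iff]
  exact ⟨⟨⟨⟨ae_smul_dirac (by omega) _, ae_smul_dirac (by omega) _⟩, ae_smul_dirac (by omega) _⟩,
    ae_smul_dirac (by omega) _⟩, ae_smul_dirac (by omega) _⟩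

theorem exists_monotone_coupling_binomialKernel (h0 : 0 ≤ lam) (h1 : lam ≤ d) {x y : ℕ}
    (hxy : x ≤ y) (hy : y ≤ d) : ∃ ξ : Measure (ℕ × ℕ), ξ.map Prod.fst = binomialKernel d lam x ∧
      ξ.map Prod.snd = binomialKernel d lam y ∧ ∀ᵐ p ∂ξ, p.1 ≤ p.2 := by
  obtain rfl | rfl | hxy2 : y = x ∨ y = x + 1 ∨ x + 2 ≤ y := by omega
  · have hdiag : Measurable fun n : ℕ => (n, n) := measurable_of_countable _
    refine ⟨(binomialKernel d lam y).map fun n => (n, n), ?_, ?_, ?_⟩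
    · rw [Measure.map_map measurable_fst hdiag]
      exact Measure.map_id
    · rw [Measure.map_map measurable_snd hdiag]
      exact Measure.map_id
    · exact ae_map_iff hdiag.aemeasurable .of_discrete |>.2 (.of_forall fun _ => le_rfl)
  · exact ⟨_, map_fst_binomialSuccCoupling h0 h1 hy, map_snd_binomialSuccCoupling h0 h1 hy,
      ae_le_binomialSuccCoupling x⟩
  · have := isProbabilityMeasure_binomialKernel h0 h1 (x := x) (by omega)
    have := isProbabilityMeasure_binomialKernel h0 h1 hy
    refine ⟨(binomialKernel d lam x).prod (binomialKernel d lam y), by simp, by simp, ?_⟩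
    rw [Measure.ae_prod_iff_ae_ae .of_discrete]
    exact (ae_binomialKernel x).mono fun a ha =>
      (ae_binomialKernel y).mono fun b hb => by omega

theorem W1_binomialKernel_le_of_le (h0 : 0 ≤ lam) (h1 : lam ≤ d) {x y : ℕ} (hxy : x ≤ y)
    (hy : y ≤ d) :
    W1 (binomialKernel d lam x) (binomialKernel d lam y)
      ≤ ENNReal.ofReal ((1 - 1 / (d : ℝ)) * (y - x)) := by
  obtain ⟨ξ, hfst, hsnd, hle⟩ := exists_monotone_coupling_binomialKernel h0 h1 hxy hy
  have hx : x ≤ d := hxy.trans hy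
  refine (Nat.W1_le_of_monotone_coupling ξ hfst hsnd hle ?_).trans_eq ?_
  · rw [lintegral_natCast_binomialKernel h0 h1 hx]
    exact ENNReal.ofReal_ne_top
  · have hmean_nonneg : 0 ≤ (1 - 1 / (d : ℝ)) * x + lam / d := by
      have : 1 / (d : ℝ) ≤ 1 := by simpa only [one_div] using Nat.cast_inv_le_one d
      exact add_nonneg (mul_nonneg (by linarith) x.cast_nonneg) (div_nonneg h0 d.cast_nonneg)
    rw [lintegral_natCast_binomialKernel h0 h1 hx, lintegral_natCast_binomialKernel h0 h1 hy,
      ← ENNReal.ofReal_sub _ hmean_nonneg]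
    congr 1
    ring

theorem diffSq_binomialKernel_le (h0 : 0 ≤ lam) (h1 : lam ≤ d) {x : ℕ} (hx : x ≤ d) :
    diffSq (binomialKernel d lam) x ≤ (lam + x) / d := by
  have hup := binomialUp_nonneg h0 hx
  have hdown := binomialDown_nonneg h1 x
  have hstay := binomialStay_nonneg h0 h1 hx
  have hfar : dist (x + 1) (x - 1) ≤ 2 := by
    rcases x with _ | x <;> norm_num [Nat.dist_eq, add_sub_right_comm]
  have hnear : dist (x - 1) x ≤ 1 := by
    rcases x with _ | x <;> norm_num [Nat.dist_eq]
  have hstep : dist (x + 1) x = 1 := by simp [Nat.dist_eq]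
  have hstay_eq : binomialStay d lam x = 1 - binomialUp d lam x - binomialDown d lam x := by
    linarith [binomialUp_add_binomialDown_add_binomialStay (d := d) (lam := lam) x]
  have hgap :
      (lam + x) / d - (binomialUp d lam x + binomialDown d lam x) = 2 * lam * x / d ^ 2 := by
    simp only [binomialUp, binomialDown]
    ring
  rw [diffSq, binomialKernel_eq, half_integral_integral_dist_sq_three hup hdown hstay, hstep]
  calc _ ≤ binomialUp d lam x * binomialDown d lam x * 2 ^ 2
        + binomialUp d lam x * binomialStay d lam x * 1 ^ 2
        + binomialDown d lam x * binomialStay d lam x * 1 ^ 2 := by gcongr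
    _ = binomialUp d lam x + binomialDown d lam x
        - (binomialUp d lam x - binomialDown d lam x) ^ 2 := by rw [hstay_eq]; ring
    _ ≤ (lam + x) / d := by
        have : 0 ≤ 2 * lam * x / d ^ 2 := by positivity
        linarith [sq_nonneg (binomialUp d lam x - binomialDown d lam x)]

end BinomialChain

theorem binomial_chain_curvature_and_diffusion_general
    (d : ℕ) (lam : ℝ) (hlam0 : 0 < lam) (hlam1 : lam < d) :
    (∀ x y : ℕ, x ≤ d → y ≤ d →
      W1 (binomialKernel d lam x) (binomialKernel d lam y)
        ≤ ENNReal.ofReal ((1 - 1 / (d : ℝ)) * dist x y)) ∧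
    (∀ x : ℕ, x ≤ d →
      diffSq (binomialKernel d lam) x ≤ (lam + x) / d) := by
  refine ⟨fun x y hx hy => ?_, fun x hx => diffSq_binomialKernel_le hlam0.le hlam1.le hx⟩
  rcases le_total x y with hxy | hyx
  · rw [Nat.dist_eq, abs_sub_comm, abs_of_nonneg (sub_nonneg.2 (Nat.cast_le.2 hxy))]
    exact W1_binomialKernel_le_of_le hlam0.le hlam1.le hxy hy
  · rw [W1_comm, Nat.dist_eq, abs_of_nonneg (sub_nonneg.2 (Nat.cast_le.2 hyx))]
    exact W1_binomialKernel_le_of_le hlam0.le hlam1.le hyx hx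

/-- **Curvature and diffusion constant of the binomial Markov chain** (Section 2.3 of
Joulin–Ollivier): for `0 < λ < d`, the binomial chain on `{0,…,d}` has Ricci curvature
`κ ≥ 1/d`, i.e. `W₁(P_x,P_y) ≤ (1 − 1/d)|x−y|`, and `σ(x)² ≤ (λ+x)/d`. -/
theorem binomial_chain_curvature_and_diffusion
    (d : ℕ) (hd : 1 ≤ d) (lam : ℝ) (hlam0 : 0 < lam) (hlam1 : lam < d) :
    (∀ x y : ℕ, x ≤ d → y ≤ d →
      W1 (binomialKernel d lam x) (binomialKernel d lam y)
        ≤ ENNReal.ofReal ((1 - 1 / (d : ℝ)) * dist x y)) ∧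
    (∀ x : ℕ, x ≤ d →
      diffSq (binomialKernel d lam) x ≤ (lam + x) / d) :=
  binomial_chain_curvature_and_diffusion_general d lam hlam0 hlam1

end
end
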